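/- arXiv:2406.05750 — 4 statements merged into one kernel-verified Lean document; each statement's English description precedes it below -/
import Mathlib

section
/- Let A and B be n×n complex matrices such that conj(B)·A* = conj(A)·conj(B) and B is symmetric (Bᵗ = B). Then the determinant of the 2n×2n block matrix [[A, B], [-conj(B), conj(A)]] equals det(A·A* + B·B*). -/
open Matrix Polynomial

lemma map_conj_conj (n : ℕ) (M : Matrix (Fin n) (Fin n) ℂ) :
    (M.map (starRingEnd ℂ)).map (starRingEnd ℂ) = M := by
  rw [Matrix.map_map]
  convert Matrix.map_id M
  ext x
  exact star_star x

lemma inv_case (n : ℕ) (A B : Matrix (Fin n) (Fin n) ℂ)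
    (h1 : (B.map (starRingEnd ℂ)) * Aᴴ = (A.map (starRingEnd ℂ)) * (B.map (starRingEnd ℂ)))
    (h2 : Bᵀ = B) (hA : IsUnit A.det) :
    (Matrix.fromBlocks A B (-(B.map (starRingEnd ℂ))) (A.map (starRingEnd ℂ))).det
      = (A * Aᴴ + B * Bᴴ).det := by
  set Ac := A.map (starRingEnd ℂ) with hAc
  set Bc := B.map (starRingEnd ℂ) with hBc
  have hBH : Bᴴ = Bc := by
    rw [conjTranspose, h2]; rfl
  have hAcT : Acᵀ = Aᴴ := by
    rw [hAc, ← Matrix.transpose_map]; rfl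
  have hBcT : Bcᵀ = Bc := by
    rw [hBc, ← Matrix.transpose_map, h2]
  have hAcH : Acᴴ = Aᵀ := by
    rw [conjTranspose, ← Matrix.transpose_map]
    exact map_conj_conj n Aᵀ
  have hBcH : Bcᴴ = B := by
    rw [conjTranspose, ← Matrix.transpose_map]
    rw [show (Bᵀ.map (starRingEnd ℂ)).map star = Bᵀ from map_conj_conj n Bᵀ, h2]
  have hAB : A * B = B * Aᵀ := by
    have := congrArg conjTranspose h1
    rwa [conjTranspose_mul, conjTranspose_mul, conjTranspose_conjTranspose, hBcH, hAcH] at this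
  have : Invertible A := (isUnit_iff_isUnit_det A).mpr hA |>.invertible
  rw [det_fromBlocks₁₁]
  have key : A * Aᴴ + B * Bᴴ = A * (Ac - (-Bc) * ⅟A * B)ᵀ := by
    rw [sub_eq_add_neg, neg_mul, neg_mul, neg_neg, transpose_add, transpose_mul, transpose_mul,
      hAcT, Matrix.mul_add, h2, hBH]
    congr 1
    rw [← Matrix.mul_assoc, ← Matrix.mul_assoc, hAB, Matrix.mul_assoc B Aᵀ, ← transpose_mul,
      invOf_mul_self, transpose_one, Matrix.mul_one, hBcT]
  rw [key, det_mul, det_transpose]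

theorem block_det_eq (n : ℕ) (A B : Matrix (Fin n) (Fin n) ℂ)
    (h1 : (B.map (starRingEnd ℂ)) * Aᴴ = (A.map (starRingEnd ℂ)) * (B.map (starRingEnd ℂ)))
    (h2 : Bᵀ = B) :
    (Matrix.fromBlocks A B (-(B.map (starRingEnd ℂ))) (A.map (starRingEnd ℂ))).det
      = (A * Aᴴ + B * Bᴴ).det := by
  classical
  set Ac := A.map (starRingEnd ℂ) with hAc
  set Bc := B.map (starRingEnd ℂ) with hBc
  -- polynomial p in one variable encoding the identity for A + z•1
  set S : Matrix (Fin n) (Fin n) (Polynomial ℂ) := Matrix.scalar (Fin n) (X : Polynomial ℂ)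
    with hS
  set p : Polynomial ℂ :=
    (fromBlocks (A.map Polynomial.C + S) (B.map Polynomial.C)
        (-(Bc.map Polynomial.C)) (Ac.map Polynomial.C + S)).det
      - ((A.map Polynomial.C + S) * (Aᴴ.map Polynomial.C + S)
          + (B.map Polynomial.C) * (Bᴴ.map Polynomial.C)).det with hp
  have hev : ∀ z : ℂ, p.eval z =
      (fromBlocks (A + Matrix.scalar (Fin n) z) B (-Bc) (Ac + Matrix.scalar (Fin n) z)).det
        - ((A + Matrix.scalar (Fin n) z) * (Aᴴ + Matrix.scalar (Fin n) z) + B * Bᴴ).det := by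
    intro z
    have hmap : ∀ M : Matrix (Fin n) (Fin n) ℂ,
        (M.map Polynomial.C).map (Polynomial.eval z) = M := by
      intro M; rw [Matrix.map_map]
      convert Matrix.map_id M
      ext x; simp
    have hSm : S.map (Polynomial.eval z) = Matrix.scalar (Fin n) z := by
      rw [hS, scalar_apply, scalar_apply, Matrix.diagonal_map (by simp)]
      simp
    have hdet : ∀ M : Matrix (Fin n ⊕ Fin n) (Fin n ⊕ Fin n) (Polynomial ℂ),
        Polynomial.eval z M.det = (M.map (Polynomial.eval z)).det := by
      intro M
      have := (Polynomial.evalRingHom z).map_det M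
      simpa [Polynomial.coe_evalRingHom] using this
    have hdet' : ∀ M : Matrix (Fin n) (Fin n) (Polynomial ℂ),
        Polynomial.eval z M.det = (M.map (Polynomial.eval z)).det := by
      intro M
      have := (Polynomial.evalRingHom z).map_det M
      simpa [Polynomial.coe_evalRingHom] using this
    have hmm : ∀ M N : Matrix (Fin n) (Fin n) (Polynomial ℂ),
        (M * N).map (Polynomial.eval z) = M.map (Polynomial.eval z) * N.map (Polynomial.eval z) := by
      intro M N
      have := _root_.map_mul ((Polynomial.evalRingHom z).mapMatrix (m := Fin n)) M N
      simpa [RingHom.mapMatrix_apply, Polynomial.coe_evalRingHom] using this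
    have hadd : ∀ M N : Matrix (Fin n) (Fin n) (Polynomial ℂ),
        (M + N).map (Polynomial.eval z) = M.map (Polynomial.eval z) + N.map (Polynomial.eval z) :=
      fun M N => Matrix.map_add _ (by simp) M N
    have hneg : ∀ M : Matrix (Fin n) (Fin n) (Polynomial ℂ),
        (-M).map (Polynomial.eval z) = -(M.map (Polynomial.eval z)) := by
      intro M; ext i j; simp
    rw [hp, Polynomial.eval_sub, hdet, hdet']
    simp only [Matrix.fromBlocks_map, hadd, hmm, hneg, hmap, hSm]
  set q := (-A).charpoly with hq
  have hqev : ∀ z : ℂ, q.eval z = (A + Matrix.scalar (Fin n) z).det := by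
    intro z
    have hmap : ∀ M : Matrix (Fin n) (Fin n) ℂ,
        (M.map Polynomial.C).map (Polynomial.eval z) = M := by
      intro M; rw [Matrix.map_map]
      convert Matrix.map_id M
      ext x; simp
    have hcm : charmatrix (-A) = Matrix.scalar (Fin n) (X : Polynomial ℂ) + A.map Polynomial.C := by
      rw [charmatrix, sub_eq_add_neg, RingHom.mapMatrix_apply]
      congr 1
      ext i j; simp
    have hdet' : ∀ M : Matrix (Fin n) (Fin n) (Polynomial ℂ),
        Polynomial.eval z M.det = (M.map (Polynomial.eval z)).det := by
      intro M
      have := (Polynomial.evalRingHom z).map_det M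
      simpa [Polynomial.coe_evalRingHom] using this
    have hadd : ∀ M N : Matrix (Fin n) (Fin n) (Polynomial ℂ),
        (M + N).map (Polynomial.eval z) = M.map (Polynomial.eval z) + N.map (Polynomial.eval z) :=
      fun M N => Matrix.map_add _ (by simp) M N
    have hSm : (Matrix.scalar (Fin n) (X : Polynomial ℂ)).map (Polynomial.eval z)
        = Matrix.scalar (Fin n) z := by
      rw [scalar_apply, scalar_apply, Matrix.diagonal_map (by simp)]
      simp
    rw [hq, Matrix.charpoly, hcm, hdet', hadd, hSm, hmap, add_comm]
  have hqne : q ≠ 0 := ((-A).charpoly_monic).ne_zero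
  have hfin : Set.Finite {t : ℝ | q.IsRoot ((t : ℂ))} := by
    have : {t : ℝ | q.IsRoot ((t : ℂ))} = (fun t : ℝ => (t : ℂ)) ⁻¹' {x | q.IsRoot x} := rfl
    rw [this]
    exact Set.Finite.preimage (Complex.ofReal_injective.injOn) (Polynomial.finite_setOf_isRoot hqne)
  have hinf : Set.Infinite {t : ℝ | ¬ q.IsRoot ((t : ℂ))} := by
    have := hfin.infinite_compl
    simpa [Set.compl_setOf] using this
  have hroots : ∀ t : ℝ, ¬ q.IsRoot ((t : ℂ)) → p.IsRoot ((t : ℂ)) := by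
    intro t ht
    set z := ((t : ℂ)) with hzdef
    have hz : starRingEnd ℂ z = z := Complex.conj_ofReal t
    have hDH : (Matrix.scalar (Fin n) z)ᴴ = Matrix.scalar (Fin n) z := by
      rw [scalar_apply, Matrix.diagonal_conjTranspose]
      exact congrArg _ (funext fun _ => hz)
    have hDc : (Matrix.scalar (Fin n) z).map (starRingEnd ℂ) = Matrix.scalar (Fin n) z := by
      rw [scalar_apply, Matrix.diagonal_map (by simp)]
      exact congrArg _ (funext fun _ => hz)
    have hA'H : (A + Matrix.scalar (Fin n) z)ᴴ = Aᴴ + Matrix.scalar (Fin n) z := by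
      rw [conjTranspose_add, hDH]
    have hA'c : (A + Matrix.scalar (Fin n) z).map (starRingEnd ℂ)
        = Ac + Matrix.scalar (Fin n) z := by
      rw [Matrix.map_add _ (by simp), hDc, hAc]
    have hcomm : Bc * Matrix.scalar (Fin n) z = Matrix.scalar (Fin n) z * Bc :=
      (Matrix.scalar_commute z (fun r => Commute.all z r) Bc).eq.symm
    have h1' : Bc * (A + Matrix.scalar (Fin n) z)ᴴ
        = ((A + Matrix.scalar (Fin n) z).map (starRingEnd ℂ)) * Bc := by
      rw [hA'H, hA'c, Matrix.mul_add, Matrix.add_mul, h1, hcomm]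
    have hU : IsUnit (A + Matrix.scalar (Fin n) z).det := by
      rw [← hqev z]
      exact isUnit_iff_ne_zero.mpr ht
    have hkey := inv_case n (A + Matrix.scalar (Fin n) z) B h1' h2 hU
    rw [hA'c, hA'H] at hkey
    rw [Polynomial.IsRoot, hev z, hkey, sub_self]
  have hpz : p = 0 := by
    apply Polynomial.eq_zero_of_infinite_isRoot
    apply Set.Infinite.mono _ (hinf.image (Complex.ofReal_injective.injOn))
    rintro x ⟨t, ht, rfl⟩
    exact hroots t ht
  have h0 : p.eval 0 = 0 := by rw [hpz]; simp
  rw [hev 0] at h0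
  simp only [map_zero, add_zero] at h0
  exact sub_eq_zero.mp h0
end

section
/- Let V_n be the n×n unitary matrix with entries (V_n)_{p,q} = (1/√n)·e^{i(p-1)θ_q} where θ_q = (2q-1)π/n, and let J_n be the antidiagonal permutation matrix ((J_n)_{p,q} = 1 iff p+q = n+1). Then V_n⁻¹ · J_n · V_n = -A, where A is the antidiagonal matrix whose antidiagonal entries from top-right to bottom-left are e^{iπ/n}, e^{3iπ/n}, …, e^{(2n-1)iπ/n}. -/
open Matrix Complex
open scoped Real

/-!
The columns of `V` are, up to the factor `1 / √n`, the power vectors `(ω_q ^ p)_p` of the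
`n`-th roots `ω_q = exp ((2q+1)πi/n)` of `-1`. Reversing the rows turns `ω_q ^ (n-1-p)` into
`ω_q ^ n * ω_q ^ -(p+1) = -(ω_{n-1-q}) ^ (p+1)`, because `ω_q ^ n = -1` and
`ω_{n-1-q} = ω_q⁻¹`; this is the identity `J V = V (-A)`. Since the `ω_q` are distinct, `V` is
an invertible Vandermonde matrix.
-/

namespace Matrix

variable {R : Type*} {n : ℕ}

def antidiagonal [Zero R] (d : Fin n → R) : Matrix (Fin n) (Fin n) R :=
  of fun p q => if q = p.rev then d p else 0

lemma antidiagonal_mul [NonUnitalNonAssocSemiring R] (d : Fin n → R)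
    (M : Matrix (Fin n) (Fin n) R) :
    antidiagonal d * M = of fun p q => d p * M p.rev q := by
  ext p q
  simp [antidiagonal, mul_apply, ite_mul]

lemma mul_antidiagonal [NonUnitalNonAssocSemiring R] (M : Matrix (Fin n) (Fin n) R)
    (d : Fin n → R) :
    M * antidiagonal d = of fun p q => M p q.rev * d q.rev := by
  ext p q
  simp [antidiagonal, mul_apply, Fin.rev_eq_iff.symm]

lemma of_ite_add_eq_antidiagonal [Zero R] (d : Fin n → R) :
    (of fun p q : Fin n => if (p : ℕ) + q + 2 = n + 1 then d p else 0) = antidiagonal d := by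
  ext p q
  simp only [antidiagonal, of_apply, Fin.ext_iff, Fin.val_rev]
  exact if_congr (by omega) rfl rfl

theorem antidiagonal_one_mul_vandermonde_transpose [CommRing R] (x : Fin n → R)
    (hpow : ∀ q, x q ^ n = -1) (hrev : ∀ q, x q.rev * x q = 1) :
    antidiagonal 1 * (vandermonde x)ᵀ = (vandermonde x)ᵀ * -antidiagonal x := by
  ext p q
  have hp : (p.rev : ℕ) + (p + 1) = n := by rw [Fin.val_rev]; omega
  simp only [antidiagonal_mul, Matrix.mul_neg, mul_antidiagonal, of_apply, Pi.one_apply, one_mul,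
    transpose_apply, vandermonde_apply, neg_apply, ← pow_succ]
  calc x q ^ (p.rev : ℕ) = x q ^ (p.rev : ℕ) * (x q.rev * x q) ^ ((p : ℕ) + 1) := by
        rw [hrev, one_pow, mul_one]
    _ = x q ^ ((p.rev : ℕ) + (p + 1)) * x q.rev ^ ((p : ℕ) + 1) := by ring
    _ = x q ^ n * x q.rev ^ ((p : ℕ) + 1) := by rw [hp]
    _ = -x q.rev ^ ((p : ℕ) + 1) := by rw [hpow, neg_one_mul]

end Matrix

noncomputable def negOneRoot (n : ℕ) (q : Fin n) : ℂ := exp ((2 * q + 1) * π / n * I)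

lemma negOneRoot_eq_mul_pow {n : ℕ} (q : Fin n) :
    negOneRoot n q = exp (π * I / n) * exp (2 * π * I / n) ^ (q : ℕ) := by
  rw [negOneRoot, ← exp_nat_mul, ← exp_add]
  ring_nf

lemma negOneRoot_pow_self {n : ℕ} (q : Fin n) : negOneRoot n q ^ n = -1 := by
  have hn : (n : ℂ) ≠ 0 := Nat.cast_ne_zero.mpr (Fin.pos q).ne'
  rw [negOneRoot_eq_mul_pow, mul_pow, ← pow_mul, pow_mul',
    (isPrimitiveRoot_exp n (Fin.pos q).ne').pow_eq_one, one_pow, mul_one, ← exp_nat_mul,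
    mul_div_cancel₀ _ hn, exp_pi_mul_I]

lemma negOneRoot_rev_mul {n : ℕ} (q : Fin n) : negOneRoot n q.rev * negOneRoot n q = 1 := by
  have hn : (n : ℂ) ≠ 0 := Nat.cast_ne_zero.mpr (Fin.pos q).ne'
  have hq : (q.rev : ℂ) + q + 1 = n := by
    norm_cast; rw [Fin.val_rev]; omega
  rw [negOneRoot, negOneRoot, ← exp_add]
  convert exp_two_pi_mul_I using 2
  field_simp
  linear_combination 2 * hq

lemma negOneRoot_injective (n : ℕ) : Function.Injective (negOneRoot n) := by
  intro q r h
  have hn : n ≠ 0 := (Fin.pos q).ne'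
  rw [negOneRoot_eq_mul_pow, negOneRoot_eq_mul_pow, mul_right_inj' (exp_ne_zero _)] at h
  exact Fin.ext ((isPrimitiveRoot_exp n hn).pow_inj q.isLt r.isLt h)

theorem V_n_conjugates_antidiagonal (n : ℕ)
    (V J A : Matrix (Fin n) (Fin n) ℂ)
    (hV : V = Matrix.of fun p q : Fin n =>
      (1 / Real.sqrt n : ℂ) *
        Complex.exp (Complex.I * (p : ℕ) * ((2 * ((q : ℕ) + 1) - 1 : ℕ) * Real.pi / n)))
    (hJ : J = Matrix.of fun p q : Fin n =>
      if (p : ℕ) + (q : ℕ) + 2 = n + 1 then (1 : ℂ) else 0)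
    (hA : A = Matrix.of fun p q : Fin n =>
      if (p : ℕ) + (q : ℕ) + 2 = n + 1 then
        Complex.exp (Complex.I * ((2 * ((p : ℕ) + 1) - 1 : ℕ) * Real.pi / n))
      else 0) :
    V⁻¹ * J * V = -A := by
  obtain rfl | hn := n.eq_zero_or_pos
  · exact Subsingleton.elim _ _
  have hodd (m : ℕ) : ((2 * (m + 1) - 1 : ℕ) : ℂ) = 2 * m + 1 := by
    rw [show 2 * (m + 1) - 1 = 2 * m + 1 by omega]; push_cast; ring
  set c : ℂ := 1 / Real.sqrt n
  obtain rfl : V = c • (vandermonde (negOneRoot n))ᵀ := by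
    rw [hV]; ext p q
    simp only [of_apply, Matrix.smul_apply, transpose_apply, vandermonde_apply, smul_eq_mul,
      negOneRoot, ← exp_nat_mul, hodd]
    ring_nf
  obtain rfl : J = antidiagonal 1 := hJ.trans (of_ite_add_eq_antidiagonal _)
  obtain rfl : A = antidiagonal (negOneRoot n) := by
    rw [hA, ← of_ite_add_eq_antidiagonal]; ext p q
    simp only [of_apply, negOneRoot, hodd]
    ring_nf
  have hc : c ≠ 0 :=
    div_ne_zero one_ne_zero (ofReal_ne_zero.mpr (Real.sqrt_pos.mpr (Nat.cast_pos.mpr hn)).ne')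
  have hdet : IsUnit (c • (vandermonde (negOneRoot n))ᵀ).det := by
    rw [det_smul, det_transpose, isUnit_iff_ne_zero]
    exact mul_ne_zero (pow_ne_zero _ hc) (det_vandermonde_ne_zero_iff.mpr (negOneRoot_injective n))
  have hcomm := antidiagonal_one_mul_vandermonde_transpose (negOneRoot n) negOneRoot_pow_self
    negOneRoot_rev_mul
  rw [Matrix.mul_assoc, Matrix.mul_smul, hcomm, ← Matrix.smul_mul, ← Matrix.mul_assoc,
    nonsing_inv_mul _ hdet, Matrix.one_mul]
end

section
/- For positive integers m₁ and all real a, x: det(T_{2m₁}(-a, x, a) + a·B^{Cyl} + iλ·J_{2m₁}) = ∏_{j=1}^{m₁} (x² + 4a²·sin²((2j-1)π/(2m₁)) + λ²) for every real λ ≥ 0, where T_{2m₁}(-a,x,a) is the 2m₁×2m₁ tridiagonal Toeplitz matrix with diagonal x, subdiagonal -a, superdiagonal a; B^{Cyl} has (1,2m₁)-entry 1, (2m₁,1)-entry -1, and zeros elsewhere; and J_{2m₁} is the antidiagonal permutation matrix. -/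
/-!
Put `n = 2m`. The matrix is `x + a (S - Sᵀ) + iλ J`, where `S` is the skew-cyclic shift and `J`
reverses coordinates. For every `ζ` with `ζ ^ n = -1` the vector `v_ζ = (ζ ^ p)_p` satisfies
`S v_ζ = ζ v_ζ`, `Sᵀ v_ζ = ζ⁻¹ v_ζ` and `J v_ζ = -ζ⁻¹ v_{ζ⁻¹}`, so the plane spanned by `v_ζ` and
`v_{ζ⁻¹}` is invariant. The `2m` roots `ζ_j^{±1}`, `ζ_j = exp(iθ_j)` with `θ_j = (2j+1)π/n`, are
distinct, so the Vandermonde matrix of these vectors is invertible and conjugates the matrix to a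
block-diagonal one with `m` blocks of determinant `x² - a²(ζ_j - ζ_j⁻¹)² + λ² = x² + 4a² sin² θ_j + λ²`.
-/

open Matrix Complex

section SkewCirculant

variable {K : Type*} [Field K] {n : ℕ}

def skewShift (n : ℕ) : Matrix (Fin n) (Fin n) K :=
  of fun p q => if (p : ℕ) + 1 = q then 1 else if (p : ℕ) + 1 = n ∧ (q : ℕ) = 0 then -1 else 0

def powVec (n : ℕ) (ζ : K) : Fin n → K := fun p => ζ ^ (p : ℕ)

def cylMatrix (n : ℕ) (x a c : K) : Matrix (Fin n) (Fin n) K :=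
  x • 1 + a • (skewShift n - (skewShift n)ᵀ) + c • (Fin.revPerm : Equiv.Perm (Fin n)).permMatrix K

lemma tridiag_add_smul_corners (hn : 2 ≤ n) (x a : K) :
    (of fun p q : Fin n =>
        if p = q then x else if (p : ℕ) + 1 = q then a else if (q : ℕ) + 1 = p then -a else 0)
      + a • (of fun p q : Fin n =>
        if (p : ℕ) = 0 ∧ (q : ℕ) + 1 = n then (1 : K)
        else if (p : ℕ) + 1 = n ∧ (q : ℕ) = 0 then -1 else 0)
      = x • 1 + a • (skewShift n - (skewShift n)ᵀ) := by
  ext p q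
  simp only [Matrix.add_apply, Matrix.smul_apply, Matrix.sub_apply, transpose_apply, one_apply,
    skewShift, of_apply, smul_eq_mul, Fin.ext_iff]
  split_ifs <;> first | omega | ring1

lemma antidiag_eq_permMatrix_revPerm :
    (of fun p q : Fin n => if (p : ℕ) + q + 2 = n + 1 then (1 : K) else 0)
      = (Fin.revPerm : Equiv.Perm (Fin n)).permMatrix K := by
  ext p q
  have hp := p.isLt
  have hq := q.isLt
  simp only [of_apply, Equiv.Perm.permMatrix, PEquiv.toMatrix_apply, Equiv.toPEquiv_apply,
    Option.mem_some_iff, Fin.revPerm_apply, Fin.ext_iff, Fin.val_rev]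
  exact if_congr (by omega) rfl rfl

lemma skewShift_mulVec_powVec {ζ : K} (hζ : ζ ^ n = -1) :
    skewShift n *ᵥ powVec n ζ = ζ • powVec n ζ := by
  ext p
  have hp := p.isLt
  simp only [mulVec, dotProduct, skewShift, of_apply, powVec, Pi.smul_apply, smul_eq_mul]
  by_cases hlast : (p : ℕ) + 1 = n
  · rw [Fintype.sum_eq_single ⟨0, by omega⟩ fun q hq => by
      have hq0 : (q : ℕ) ≠ 0 := fun h => hq (Fin.ext h)
      simp [hq0, show (p : ℕ) + 1 ≠ q by omega]]
    simp [hlast, ← pow_succ', hζ, show n ≠ 0 by omega]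
  · rw [Fintype.sum_eq_single ⟨p + 1, by omega⟩ fun q hq => by
      have : (p : ℕ) + 1 ≠ q := fun h => hq (Fin.ext h.symm)
      simp [this, hlast]]
    simp [pow_succ']

lemma skewShift_transpose_mulVec_powVec {ζ : K} (hζ : ζ ^ n = -1) :
    (skewShift n)ᵀ *ᵥ powVec n ζ = ζ⁻¹ • powVec n ζ := by
  ext p
  have hp := p.isLt
  have hζ0 : ζ ≠ 0 := by rintro rfl; simp [show n ≠ 0 by omega] at hζ
  simp only [mulVec, dotProduct, skewShift, transpose_apply, of_apply, powVec, Pi.smul_apply,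
    smul_eq_mul]
  by_cases hfirst : (p : ℕ) = 0
  · rw [Fintype.sum_eq_single ⟨n - 1, by omega⟩ fun q hq => by
      have : (q : ℕ) + 1 ≠ n := fun h => hq (Fin.ext (by simp only; omega))
      simp [this, show (q : ℕ) + 1 ≠ p by omega]]
    have hlast : ζ ^ (n - 1) * ζ = -1 := by rw [← pow_succ, Nat.sub_add_cancel (by omega), hζ]
    simp only [hfirst, show n - 1 + 1 = n by omega, show n ≠ 0 by omega, if_false, and_self,
      if_true, pow_zero, mul_one]
    field_simp
    linear_combination -hlast
  · rw [Fintype.sum_eq_single ⟨p - 1, by omega⟩ fun q hq => by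
      have : (q : ℕ) + 1 ≠ p := fun h => hq (Fin.ext (by simp only; omega))
      simp [this, hfirst]]
    obtain ⟨k, hk⟩ : ∃ k, (p : ℕ) = k + 1 := ⟨p - 1, by omega⟩
    simp only [hk, Nat.add_sub_cancel, if_true, one_mul, pow_succ]
    field_simp

lemma revPerm_permMatrix_mulVec_powVec {ζ : K} (hζ : ζ ≠ 0) :
    (Fin.revPerm : Equiv.Perm (Fin n)).permMatrix K *ᵥ powVec n ζ
      = ζ ^ (n - 1) • powVec n ζ⁻¹ := by
  ext p
  have hp := p.isLt
  simp only [permMatrix_mulVec, Function.comp_apply, Fin.revPerm_apply, powVec, Fin.val_rev,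
    Pi.smul_apply, smul_eq_mul, inv_pow]
  rw [eq_mul_inv_iff_mul_eq₀ (pow_ne_zero _ hζ), ← pow_add]
  congr 1
  omega

lemma cylMatrix_mulVec_powVec {x a c ζ : K} (hζ : ζ ^ n = -1) :
    cylMatrix n x a c *ᵥ powVec n ζ
      = (x + a * (ζ - ζ⁻¹)) • powVec n ζ - (c * ζ⁻¹) • powVec n ζ⁻¹ := by
  obtain _ | n := n
  · exact Subsingleton.elim _ _
  have hζ0 : ζ ≠ 0 := by rintro rfl; simp at hζ
  have hlast : ζ ^ n = -ζ⁻¹ := by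
    rw [pow_succ] at hζ
    field_simp
    linear_combination hζ
  simp only [cylMatrix, add_mulVec, smul_mulVec, sub_mulVec, one_mulVec,
    skewShift_mulVec_powVec hζ, skewShift_transpose_mulVec_powVec hζ,
    revPerm_permMatrix_mulVec_powVec hζ0, Nat.add_sub_cancel, hlast]
  module

def cylBlock (x a c ζ : K) : Matrix (Fin 2) (Fin 2) K :=
  !![x + a * (ζ - ζ⁻¹), -(c * ζ); -(c * ζ⁻¹), x + a * (ζ⁻¹ - ζ)]

lemma det_cylBlock {x a c ζ : K} (hζ : ζ ≠ 0) :
    (cylBlock x a c ζ).det = x ^ 2 - a ^ 2 * (ζ - ζ⁻¹) ^ 2 - c ^ 2 := by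
  rw [cylBlock, det_fin_two_of]
  field_simp
  ring

lemma cylMatrix_mulVec_powVec_pair {x a c ζ : K} (hζ : ζ ^ n = -1) (i : Fin 2) :
    cylMatrix n x a c *ᵥ powVec n (![ζ, ζ⁻¹] i)
      = ∑ i', cylBlock x a c ζ i' i • powVec n (![ζ, ζ⁻¹] i') := by
  have hζinv : ζ⁻¹ ^ n = -1 := by rw [inv_pow, hζ, inv_neg, inv_one]
  fin_cases i <;>
    simp only [Fin.zero_eta, Fin.mk_one, Fin.isValue, cons_val_zero, cons_val_one,
      cons_val_fin_one, Fin.sum_univ_two, cylBlock, of_apply, cons_val', inv_inv,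
      cylMatrix_mulVec_powVec hζ, cylMatrix_mulVec_powVec hζinv] <;>
    module

theorem det_eq_prod_det_of_mulVec_powVec {o β : Type*} [Fintype o] [DecidableEq o] [Fintype β]
    [DecidableEq β] (e : o × β ≃ Fin n) (M : Matrix (Fin n) (Fin n) K) {ζ : o × β → K}
    (hζ : Function.Injective ζ) (blk : β → Matrix o o K)
    (h : ∀ i j, M *ᵥ powVec n (ζ (i, j)) = ∑ i', blk j i' i • powVec n (ζ (i', j))) :
    M.det = ∏ j, (blk j).det := by
  set P : Matrix (Fin n) (Fin n) K := (vandermonde (ζ ∘ e.symm))ᵀ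
  have hP : P.det ≠ 0 := by
    rw [det_transpose]
    exact det_vandermonde_ne_zero_iff.mpr (hζ.comp e.symm.injective)
  have hMP : M * P = P * (blockDiagonal blk).submatrix e.symm e.symm := by
    ext p c
    obtain ⟨⟨i, j⟩, rfl⟩ := e.surjective c
    have hcol := congrFun (h i j) p
    simp only [mulVec, dotProduct, powVec] at hcol
    simp only [P, mul_apply, transpose_apply, vandermonde_apply, Function.comp_apply,
      submatrix_apply, Equiv.symm_apply_apply]
    rw [hcol, ← e.sum_comp]
    simp [Fintype.sum_prod_type, blockDiagonal_apply, Finset.sum_apply, powVec, mul_comm]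
  have hdet := congrArg det hMP
  rw [det_mul, det_mul, det_submatrix_equiv_self, det_blockDiagonal, mul_comm] at hdet
  exact mul_left_cancel₀ hP hdet

end SkewCirculant

noncomputable def cylAngle (m : ℕ) (j : Fin m) : ℝ := (2 * j + 1) * Real.pi / (2 * m)

noncomputable def cylRoot (m : ℕ) (j : Fin m) : ℂ := exp (cylAngle m j * I)

noncomputable def cylNode (m : ℕ) (ij : Fin 2 × Fin m) : ℂ :=
  ![cylRoot m ij.2, (cylRoot m ij.2)⁻¹] ij.1

lemma cylAngle_mem_Ioo {m : ℕ} (j : Fin m) : cylAngle m j ∈ Set.Ioo 0 Real.pi := by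
  have hj : (2 * j + 1 : ℝ) < 2 * m := by exact_mod_cast (by omega : 2 * (j : ℕ) + 1 < 2 * m)
  have hm : (0 : ℝ) < 2 * m := by linarith
  constructor
  · unfold cylAngle; positivity
  · rw [cylAngle, div_lt_iff₀ hm]; nlinarith [Real.pi_pos]

lemma cylAngle_injective (m : ℕ) : Function.Injective (cylAngle m) := by
  intro j k h
  have hm : (2 * m : ℝ) ≠ 0 := by have := j.pos; positivity
  rw [cylAngle, cylAngle, div_left_inj' hm, mul_left_inj' Real.pi_ne_zero] at h
  exact Fin.ext (by exact_mod_cast (by linarith : (j : ℝ) = k))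

lemma arg_cylRoot {m : ℕ} (j : Fin m) : arg (cylRoot m j) = cylAngle m j := by
  obtain ⟨h0, hπ⟩ := cylAngle_mem_Ioo j
  rw [cylRoot, exp_mul_I, arg_cos_add_sin_mul_I ⟨by linarith, hπ.le⟩]

lemma cylNode_injective (m : ℕ) : Function.Injective (cylNode m) := by
  rintro ⟨i, j⟩ ⟨i', j'⟩ h
  have harg := congrArg arg h
  have hj := cylAngle_mem_Ioo j
  have hj' := cylAngle_mem_Ioo j'
  fin_cases i <;> fin_cases i' <;>
    simp only [cylNode, Fin.zero_eta, Fin.mk_one, Fin.isValue, cons_val_zero, cons_val_one,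
      cons_val_fin_one, arg_inv, arg_cylRoot, hj.2.ne, hj'.2.ne, if_false, neg_inj,
      Prod.mk.injEq, true_and, zero_ne_one, one_ne_zero, false_and] at harg ⊢
  all_goals first | exact cylAngle_injective m harg | linarith [hj.1, hj'.1]

lemma cylRoot_pow {m : ℕ} (j : Fin m) : cylRoot m j ^ (2 * m) = -1 := by
  have hm : (m : ℂ) ≠ 0 := Nat.cast_ne_zero.mpr j.pos.ne'
  have hexp : ((2 * m : ℕ) : ℂ) * (↑((2 * j + 1) * Real.pi / (2 * m)) * I)
      = (2 * j + 1 : ℕ) * (Real.pi * I) := by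
    push_cast
    field_simp
  rw [cylRoot, ← exp_nat_mul, cylAngle, hexp, exp_nat_mul, exp_pi_mul_I, Odd.neg_one_pow ⟨j, rfl⟩]

lemma exp_mul_I_sub_inv (θ : ℝ) : exp (θ * I) - (exp (θ * I))⁻¹ = 2 * I * Real.sin θ := by
  rw [← exp_neg, ← neg_mul, exp_mul_I, exp_mul_I, cos_neg, sin_neg, ofReal_sin]
  ring

theorem det_cyl_cruciform_general (m₁ : ℕ) (hm : 0 < m₁) (a x l : ℝ)
    (T B J : Matrix (Fin (2 * m₁)) (Fin (2 * m₁)) ℂ)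
    (hT : T = Matrix.of fun p q : Fin (2 * m₁) =>
      if p = q then (x : ℂ)
      else if (p : ℕ) + 1 = (q : ℕ) then (a : ℂ)
      else if (q : ℕ) + 1 = (p : ℕ) then -(a : ℂ)
      else 0)
    (hB : B = Matrix.of fun p q : Fin (2 * m₁) =>
      if (p : ℕ) = 0 ∧ (q : ℕ) + 1 = 2 * m₁ then (1 : ℂ)
      else if (p : ℕ) + 1 = 2 * m₁ ∧ (q : ℕ) = 0 then -1
      else 0)
    (hJ : J = Matrix.of fun p q : Fin (2 * m₁) =>
      if (p : ℕ) + (q : ℕ) + 2 = 2 * m₁ + 1 then (1 : ℂ) else 0) :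
    (T + (a : ℂ) • B + (Complex.I * l) • J).det
      = ∏ j : Fin m₁,
        ((x ^ 2 + 4 * a ^ 2 * Real.sin ((2 * ((j : ℕ) + 1) - 1 : ℕ) * Real.pi / (2 * m₁)) ^ 2
            + l ^ 2 : ℝ) : ℂ) := by
  subst hT hB hJ
  rw [tridiag_add_smul_corners (by omega), antidiag_eq_permMatrix_revPerm]
  refine (det_eq_prod_det_of_mulVec_powVec finProdFinEquiv (cylMatrix _ _ _ _)
    (cylNode_injective m₁) _ fun i j => cylMatrix_mulVec_powVec_pair (cylRoot_pow j) i).trans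
    (Finset.prod_congr rfl fun j _ => ?_)
  have hangle : ((2 * ((j : ℕ) + 1) - 1 : ℕ) : ℝ) * Real.pi / (2 * m₁) = cylAngle m₁ j := by
    rw [cylAngle, show 2 * ((j : ℕ) + 1) - 1 = 2 * j + 1 by omega]
    push_cast
    rfl
  rw [det_cylBlock (ζ := cylRoot m₁ j) (exp_ne_zero _), cylRoot, exp_mul_I_sub_inv, hangle]
  push_cast
  linear_combination (-4 * (a : ℂ) ^ 2 * sin (cylAngle m₁ j : ℂ) ^ 2 - (l : ℂ) ^ 2) * I_sq

theorem det_cyl_cruciform (m₁ : ℕ) (hm : 0 < m₁) (a x l : ℝ) (hl : 0 ≤ l)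
    (T B J : Matrix (Fin (2 * m₁)) (Fin (2 * m₁)) ℂ)
    (hT : T = Matrix.of fun p q : Fin (2 * m₁) =>
      if p = q then (x : ℂ)
      else if (p : ℕ) + 1 = (q : ℕ) then (a : ℂ)
      else if (q : ℕ) + 1 = (p : ℕ) then -(a : ℂ)
      else 0)
    (hB : B = Matrix.of fun p q : Fin (2 * m₁) =>
      if (p : ℕ) = 0 ∧ (q : ℕ) + 1 = 2 * m₁ then (1 : ℂ)
      else if (p : ℕ) + 1 = 2 * m₁ ∧ (q : ℕ) = 0 then -1
      else 0)
    (hJ : J = Matrix.of fun p q : Fin (2 * m₁) =>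
      if (p : ℕ) + (q : ℕ) + 2 = 2 * m₁ + 1 then (1 : ℂ) else 0) :
    (T + (a : ℂ) • B + (Complex.I * l) • J).det
      = ∏ j : Fin m₁,
        ((x ^ 2 + 4 * a ^ 2 * Real.sin ((2 * ((j : ℕ) + 1) - 1 : ℕ) * Real.pi / (2 * m₁)) ^ 2
            + l ^ 2 : ℝ) : ℂ) :=
  det_cyl_cruciform_general m₁ hm a x l T B J hT hB hJ
end

section
/- For all real x, a₁ and positive integer m with i = √(-1): the 2m×2m matrix A = T_{2m}(-a₁, x, a₁) - i·ε·a₁·B^{Möb}, where ε = ±1, T_{2m}(-a₁,x,a₁) is tridiagonal Toeplitz with diagonal x, subdiagonal -a₁, superdiagonal a₁, and B^{Möb} has (1,2m)- and (2m,1)-entries equal to 1 and zeros elsewhere, satisfies det(A·A*) = ∏_{j=1}^{2m} (x² + 4a₁²·sin²((4j-1)π/(4m))). -/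
open Matrix


private noncomputable def thf (m : ℕ) (j : Fin (2 * m)) : ℝ :=
  ((4 * ((j : ℕ) + 1) - 1 : ℕ) : ℝ) * Real.pi / (4 * m)

private noncomputable def lf (m : ℕ) (j : Fin (2 * m)) : ℂ :=
  Complex.exp ((thf m j : ℂ) * Complex.I)

private noncomputable def df (m : ℕ) (x a₁ : ℝ) (j : Fin (2 * m)) : ℂ :=
  (x : ℂ) + ((2 * a₁ * Real.sin (thf m j) : ℝ) : ℂ) * Complex.I

private lemma detcore (m : ℕ) (hm : 0 < m) (x a₁ : ℝ)
    (A : Matrix (Fin (2 * m)) (Fin (2 * m)) ℂ)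
    (hA : ∀ p q : Fin (2 * m), A p q =
      (if (p : ℕ) = (q : ℕ) then (x : ℂ)
        else if (p : ℕ) + 1 = (q : ℕ) then (a₁ : ℂ)
        else if (q : ℕ) + 1 = (p : ℕ) then -(a₁ : ℂ) else 0)
      - Complex.I * a₁ *
        (if ((p : ℕ) = 0 ∧ (q : ℕ) + 1 = 2 * m) ∨ ((p : ℕ) + 1 = 2 * m ∧ (q : ℕ) = 0)
          then (1 : ℂ) else 0)) :
    (A * Aᴴ).det = ∏ j : Fin (2 * m),
      ((x ^ 2 + 4 * a₁ ^ 2 *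
        Real.sin ((4 * ((j : ℕ) + 1) - 1 : ℕ) * Real.pi / (4 * m)) ^ 2 : ℝ) : ℂ) := by
  have hm2 : 2 ≤ 2 * m := by omega
  have hmC : ((m : ℂ)) ≠ 0 := Nat.cast_ne_zero.mpr hm.ne'
  -- the 2m-th power of each eigenvalue root
  have hpow : ∀ j : Fin (2 * m), lf m j ^ (2 * m) = -Complex.I := by
    intro j
    rw [lf, ← Complex.exp_nat_mul]
    have harg : ((2 * m : ℕ) : ℂ) * ((thf m j : ℂ) * Complex.I)
        = (Real.pi : ℂ) * Complex.I + ((Real.pi : ℂ) / 2) * Complex.I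
          + ((j : ℕ) : ℂ) * (2 * (Real.pi : ℂ) * Complex.I) := by
      rw [thf, show (4 * ((j : ℕ) + 1) - 1 : ℕ) = 4 * (j : ℕ) + 3 from by omega]
      push_cast
      field_simp
      ring
    rw [harg, Complex.exp_add, Complex.exp_add, Complex.exp_pi_mul_I]
    have h1 : Complex.exp (((Real.pi : ℂ) / 2) * Complex.I) = Complex.I := by
      rw [Complex.exp_mul_I, Complex.cos_pi_div_two, Complex.sin_pi_div_two]
      ring
    have h2 : Complex.exp (((j : ℕ) : ℂ) * (2 * (Real.pi : ℂ) * Complex.I)) = 1 := by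
      exact_mod_cast Complex.exp_int_mul_two_pi_mul_I (j : ℕ)
    rw [h1, h2]
    ring
  have hl0 : ∀ j : Fin (2 * m), lf m j ≠ 0 := fun j => Complex.exp_ne_zero _
  -- injectivity
  have hinj : Function.Injective (lf m) := by
    intro j k h
    rw [lf, lf, Complex.exp_eq_exp_iff_exists_int] at h
    obtain ⟨t, ht⟩ := h
    have him := congrArg Complex.im ht
    simp [Complex.add_im, Complex.mul_im, Complex.ofReal_re, Complex.ofReal_im,
      Complex.I_re, Complex.I_im] at him
    rw [thf, thf, show (4 * ((j : ℕ) + 1) - 1 : ℕ) = 4 * (j : ℕ) + 3 from by omega,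
      show (4 * ((k : ℕ) + 1) - 1 : ℕ) = 4 * (k : ℕ) + 3 from by omega] at him
    have hmR : (0 : ℝ) < (m : ℝ) := by exact_mod_cast hm
    have hje : ((j : ℕ) : ℝ) = ((k : ℕ) : ℝ) + 2 * m * t := by
      have hπ := Real.pi_pos
      push_cast at him
      field_simp at him
      nlinarith [him, Real.pi_pos]
    have hjz : ((j : ℕ) : ℤ) = ((k : ℕ) : ℤ) + 2 * (m : ℤ) * t := by exact_mod_cast hje
    have hj := j.isLt
    have hk := k.isLt
    obtain ⟨c, hc⟩ : ∃ c : ℤ, c = 2 * (m : ℤ) * t := ⟨_, rfl⟩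
    rw [← hc] at hjz
    have ht0 : t = 0 := by
      rcases lt_trichotomy t 0 with h | h | h
      · have h1 : 2 * (m : ℤ) * t ≤ 2 * (m : ℤ) * (-1) :=
          mul_le_mul_of_nonneg_left (by omega) (by positivity)
        have h2 : c ≤ -(2 * (m : ℤ)) := by rw [hc]; linarith
        omega
      · exact h
      · have h1 : 2 * (m : ℤ) * 1 ≤ 2 * (m : ℤ) * t :=
          mul_le_mul_of_nonneg_left (by omega) (by positivity)
        have h2 : 2 * (m : ℤ) ≤ c := by rw [hc]; linarith
        omega
    rw [ht0] at hc
    simp at hc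
    exact Fin.ext (by omega)
  -- eigenvalue identity
  have hdeq : ∀ j : Fin (2 * m),
      (x : ℂ) + (a₁ : ℂ) * lf m j - (a₁ : ℂ) * (lf m j)⁻¹ = df m x a₁ j := by
    intro j
    rw [lf, df, ← Complex.exp_neg]
    rw [show -((thf m j : ℂ) * Complex.I) = ((-thf m j : ℝ) : ℂ) * Complex.I from by
      push_cast; ring]
    rw [Complex.exp_mul_I, Complex.exp_mul_I]
    rw [← Complex.ofReal_cos, ← Complex.ofReal_sin, ← Complex.ofReal_cos, ← Complex.ofReal_sin,
      Real.cos_neg, Real.sin_neg]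
    push_cast
    ring
  -- the key row computation
  have key : ∀ (p j : Fin (2 * m)),
      (∑ q : Fin (2 * m), A p q * lf m j ^ (q : ℕ)) = lf m j ^ (p : ℕ) * df m x a₁ j := by
    intro p j
    have hL0 : lf m j ≠ 0 := hl0 j
    have hLn : lf m j ^ (2 * m) = -Complex.I := hpow j
    have hdj : df m x a₁ j = (x : ℂ) + (a₁ : ℂ) * lf m j - (a₁ : ℂ) * (lf m j)⁻¹ :=
      (hdeq j).symm
    set L := lf m j with hLdef
    have hstep : (∑ q : Fin (2 * m), A p q * L ^ (q : ℕ))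
        = ∑ k ∈ Finset.range (2 * m),
          ((if (p : ℕ) = k then (x : ℂ) else if (p : ℕ) + 1 = k then (a₁ : ℂ)
              else if k + 1 = (p : ℕ) then -(a₁ : ℂ) else 0)
            - Complex.I * a₁ *
              (if ((p : ℕ) = 0 ∧ k + 1 = 2 * m) ∨ ((p : ℕ) + 1 = 2 * m ∧ k = 0)
                then (1 : ℂ) else 0)) * L ^ k := by
      rw [← Fin.sum_univ_eq_sum_range (fun k =>
          ((if (p : ℕ) = k then (x : ℂ) else if (p : ℕ) + 1 = k then (a₁ : ℂ)
              else if k + 1 = (p : ℕ) then -(a₁ : ℂ) else 0)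
            - Complex.I * a₁ *
              (if ((p : ℕ) = 0 ∧ k + 1 = 2 * m) ∨ ((p : ℕ) + 1 = 2 * m ∧ k = 0)
                then (1 : ℂ) else 0)) * L ^ k) (2 * m)]
      exact Finset.sum_congr rfl fun q _ => by rw [hA]
    rw [hstep, hdj]
    clear hstep hdj
    have hplt := p.isLt
    rcases Nat.lt_or_ge ((p : ℕ) + 1) (2 * m) with hpl | hpg
    · rcases Nat.eq_zero_or_pos (p : ℕ) with hp0 | hpp
      · -- first row
        rw [Finset.sum_congr rfl (fun k hk => by
          simp only [Finset.mem_range] at hk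
          rw [show ((if (p : ℕ) = k then (x : ℂ) else if (p : ℕ) + 1 = k then (a₁ : ℂ)
              else if k + 1 = (p : ℕ) then -(a₁ : ℂ) else 0)
            - Complex.I * a₁ *
              (if ((p : ℕ) = 0 ∧ k + 1 = 2 * m) ∨ ((p : ℕ) + 1 = 2 * m ∧ k = 0)
                then (1 : ℂ) else 0)) * L ^ k
            = (if k = 0 then (x : ℂ) * L ^ k else 0)
              + (if k = 1 then (a₁ : ℂ) * L ^ k else 0)
              + (if k = 2 * m - 1 then -(Complex.I * a₁) * L ^ k else 0) from by
            split_ifs <;> first | omega | ring])]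
        rw [Finset.sum_add_distrib, Finset.sum_add_distrib,
          Finset.sum_ite_eq', Finset.sum_ite_eq', Finset.sum_ite_eq']
        rw [if_pos (by simp only [Finset.mem_range]; omega),
          if_pos (by simp only [Finset.mem_range]; omega),
          if_pos (by simp only [Finset.mem_range]; omega)]
        rw [hp0]
        have hpw : L ^ (2 * m - 1) * L = -Complex.I := by
          rw [← pow_succ, show 2 * m - 1 + 1 = 2 * m from by omega, hLn]
        field_simp
        linear_combination (-Complex.I * (a₁ : ℂ)) * hpw + (a₁ : ℂ) * Complex.I_sq
      · -- interior row
        rw [Finset.sum_congr rfl (fun k hk => by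
          simp only [Finset.mem_range] at hk
          rw [show ((if (p : ℕ) = k then (x : ℂ) else if (p : ℕ) + 1 = k then (a₁ : ℂ)
              else if k + 1 = (p : ℕ) then -(a₁ : ℂ) else 0)
            - Complex.I * a₁ *
              (if ((p : ℕ) = 0 ∧ k + 1 = 2 * m) ∨ ((p : ℕ) + 1 = 2 * m ∧ k = 0)
                then (1 : ℂ) else 0)) * L ^ k
            = (if k = (p : ℕ) then (x : ℂ) * L ^ k else 0)
              + (if k = (p : ℕ) + 1 then (a₁ : ℂ) * L ^ k else 0)
              + (if k = (p : ℕ) - 1 then -(a₁ : ℂ) * L ^ k else 0) from by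
            split_ifs <;> first | omega | ring])]
        rw [Finset.sum_add_distrib, Finset.sum_add_distrib,
          Finset.sum_ite_eq', Finset.sum_ite_eq', Finset.sum_ite_eq']
        rw [if_pos (by simp only [Finset.mem_range]; omega),
          if_pos (by simp only [Finset.mem_range]; omega),
          if_pos (by simp only [Finset.mem_range]; omega)]
        have hq1 : L ^ ((p : ℕ) + 1) = L ^ (p : ℕ) * L := pow_succ L (p : ℕ)
        have hq2 : L ^ ((p : ℕ) - 1) * L = L ^ (p : ℕ) := by
          rw [← pow_succ, show (p : ℕ) - 1 + 1 = (p : ℕ) from by omega]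
        field_simp
        linear_combination ((a₁ : ℂ) * L) * hq1 + (-(a₁ : ℂ)) * hq2
    · -- last row
      have hpe : (p : ℕ) = 2 * m - 1 := by omega
      rw [Finset.sum_congr rfl (fun k hk => by
        simp only [Finset.mem_range] at hk
        rw [show ((if (p : ℕ) = k then (x : ℂ) else if (p : ℕ) + 1 = k then (a₁ : ℂ)
            else if k + 1 = (p : ℕ) then -(a₁ : ℂ) else 0)
          - Complex.I * a₁ *
            (if ((p : ℕ) = 0 ∧ k + 1 = 2 * m) ∨ ((p : ℕ) + 1 = 2 * m ∧ k = 0)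
              then (1 : ℂ) else 0)) * L ^ k
          = (if k = 2 * m - 1 then (x : ℂ) * L ^ k else 0)
            + (if k = 2 * m - 2 then -(a₁ : ℂ) * L ^ k else 0)
            + (if k = 0 then -(Complex.I * a₁) * L ^ k else 0) from by
          split_ifs <;> first | omega | ring])]
      rw [Finset.sum_add_distrib, Finset.sum_add_distrib,
        Finset.sum_ite_eq', Finset.sum_ite_eq', Finset.sum_ite_eq']
      rw [if_pos (by simp only [Finset.mem_range]; omega),
        if_pos (by simp only [Finset.mem_range]; omega),
        if_pos (by simp only [Finset.mem_range]; omega)]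
      rw [hpe]
      have hpw1 : L ^ (2 * m - 1) * L = -Complex.I := by
        rw [← pow_succ, show 2 * m - 1 + 1 = 2 * m from by omega, hLn]
      have hpw2 : L ^ (2 * m - 2) * L = L ^ (2 * m - 1) := by
        rw [← pow_succ, show 2 * m - 2 + 1 = 2 * m - 1 from by omega]
      field_simp
      linear_combination (-(a₁ : ℂ)) * hpw2 + (-(a₁ : ℂ) * L) * hpw1
  -- matrix identity A * P = P * D
  have hAP : A * (Matrix.vandermonde (lf m))ᵀ
      = (Matrix.vandermonde (lf m))ᵀ * Matrix.diagonal (df m x a₁) := by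
    ext p j
    rw [Matrix.mul_apply, Matrix.mul_diagonal]
    simp only [Matrix.transpose_apply, Matrix.vandermonde_apply]
    exact key p j
  have hdetP : (Matrix.vandermonde (lf m))ᵀ.det ≠ 0 := by
    rw [Matrix.det_transpose]
    exact Matrix.det_vandermonde_ne_zero_iff.mpr hinj
  have hdetA : A.det = ∏ j : Fin (2 * m), df m x a₁ j := by
    have h := congrArg Matrix.det hAP
    rw [Matrix.det_mul, Matrix.det_mul, Matrix.det_diagonal] at h
    apply mul_right_cancel₀ hdetP
    rw [h, mul_comm]
  rw [Matrix.det_mul, Matrix.det_conjTranspose, hdetA, star_prod, ← Finset.prod_mul_distrib]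
  apply Finset.prod_congr rfl
  intro j _
  rw [df]
  have hstar : star ((x : ℂ) + ((2 * a₁ * Real.sin (thf m j) : ℝ) : ℂ) * Complex.I)
      = (x : ℂ) - ((2 * a₁ * Real.sin (thf m j) : ℝ) : ℂ) * Complex.I := by
    simp [← Complex.ofReal_sin, Complex.star_def, map_add, _root_.map_mul, map_sub,
      Complex.conj_ofReal, Complex.conj_I]
    ring
  rw [hstar]
  rw [show Real.sin ((4 * ((j : ℕ) + 1) - 1 : ℕ) * Real.pi / (4 * m)) = Real.sin (thf m j) from by
    rw [thf]]
  push_cast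
  linear_combination (-(4 : ℂ) * (a₁ : ℂ) ^ 2 * Complex.sin ((thf m j : ℝ) : ℂ) ^ 2) *
    Complex.I_sq

theorem det_mobius_AAstar (m : ℕ) (hm : 0 < m) (x a₁ ε : ℝ) (hε : ε = 1 ∨ ε = -1)
    (T B A : Matrix (Fin (2 * m)) (Fin (2 * m)) ℂ)
    (hT : T = Matrix.of fun p q : Fin (2 * m) =>
      if p = q then (x : ℂ)
      else if (p : ℕ) + 1 = (q : ℕ) then (a₁ : ℂ)
      else if (q : ℕ) + 1 = (p : ℕ) then -(a₁ : ℂ)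
      else 0)
    (hB : B = Matrix.of fun p q : Fin (2 * m) =>
      if ((p : ℕ) = 0 ∧ (q : ℕ) + 1 = 2 * m) ∨ ((p : ℕ) + 1 = 2 * m ∧ (q : ℕ) = 0)
        then (1 : ℂ) else 0)
    (hA : A = T - (Complex.I * ε * a₁) • B) :
    (A * Aᴴ).det = ∏ j : Fin (2 * m),
      ((x ^ 2 + 4 * a₁ ^ 2 *
        Real.sin ((4 * ((j : ℕ) + 1) - 1 : ℕ) * Real.pi / (4 * m)) ^ 2 : ℝ) : ℂ) := by
  subst hT hB hA
  rcases hε with h | h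
  · subst h
    apply detcore m hm x a₁
    intro p q
    simp only [Matrix.sub_apply, Matrix.smul_apply, Matrix.of_apply, smul_eq_mul,
      Complex.ofReal_one, mul_one, Fin.ext_iff]
  · subst h
    set A : Matrix (Fin (2 * m)) (Fin (2 * m)) ℂ :=
      (Matrix.of fun p q : Fin (2 * m) =>
        if p = q then (x : ℂ)
        else if (p : ℕ) + 1 = (q : ℕ) then (a₁ : ℂ)
        else if (q : ℕ) + 1 = (p : ℕ) then -(a₁ : ℂ)
        else 0) - (Complex.I * ((-1 : ℝ) : ℂ) * a₁) •
        (Matrix.of fun p q : Fin (2 * m) =>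
          if ((p : ℕ) = 0 ∧ (q : ℕ) + 1 = 2 * m) ∨ ((p : ℕ) + 1 = 2 * m ∧ (q : ℕ) = 0)
            then (1 : ℂ) else 0) with hAdef
    have hcore := detcore m hm x a₁ (A.map (starRingEnd ℂ)) ?_
    · have hmap : (A.map (starRingEnd ℂ)) * (A.map (starRingEnd ℂ))ᴴ
          = (A * Aᴴ).map (starRingEnd ℂ) := by
        rw [Matrix.map_mul, Matrix.conjTranspose_map (starRingEnd ℂ) (fun z => by simp)]
      rw [hmap, ← RingHom.mapMatrix_apply, ← RingHom.map_det] at hcore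
      have hfinal := congrArg (starRingEnd ℂ) hcore
      rw [Complex.conj_conj, map_prod] at hfinal
      rw [hfinal]
      exact Finset.prod_congr rfl fun j _ => Complex.conj_ofReal _
    · intro p q
      rw [hAdef]
      simp only [Matrix.map_apply, Matrix.sub_apply, Matrix.smul_apply, Matrix.of_apply,
        smul_eq_mul, map_sub, _root_.map_mul, Complex.conj_I, Complex.conj_ofReal,
        Fin.ext_iff, apply_ite (starRingEnd ℂ), map_neg, _root_.map_one, _root_.map_zero]
      push_cast
      split_ifs <;> ring
end
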